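/- Let X = {u ∈ L²₀(S²) : (u, Y_n^0) = 0 for all n ≥ 1 and (u, Y_1^{±1}) = 0} and Λ = −i∂_φ M_{cos θ}(I + 6Δ^{−1}) restricted to X. Then the kernel of Λ in X equals span{Y_2^m : |m| = 1, 2}. -/

import Mathlib

open Real

/-- Eigenvalue `λ_n = n(n+1)` of `−Δ` on the unit sphere `S²`. -/
def lam (n : ℕ) : ℝ := n * (n + 1)

/-- The recurrence coefficient `a_n^m = √((n−m)(n+m)/((2n−1)(2n+1)))` in
`cos θ · Y_n^m = a_n^m Y_{n−1}^m + a_{n+1}^m Y_{n+1}^m`. -/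
noncomputable def aCoef (n : ℕ) (m : ℤ) : ℝ :=
  Real.sqrt ((((n : ℝ) - (m : ℝ)) * ((n : ℝ) + (m : ℝ))) / ((2 * (n : ℝ) - 1) * (2 * (n : ℝ) + 1)))

/-!
Fix `m ≠ 0` and put `w_n = (1 − 6/λ_n) c_n^m`. The kernel equations say
`a_{n+2} w_{n+2} = −a_{n+1} w_n`. Since `n ↦ a_n^m` is nondecreasing for `m ≠ 0`, the quantity
`a_{n+1} |w_n|` is nondecreasing along `n, n+2, n+4, …`; as `w_n → 0` (square summability), it
vanishes, and `a_{n+1}^m > 0` for `n ≥ |m|` gives `w_n = 0`. Finally `1 − 6/λ_n` vanishes only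
at `n = 2`.
-/

open Filter Topology

lemma lam_two : lam 2 = 6 := by norm_num [lam]

lemma six_lt_lam {n : ℕ} (hn : 3 ≤ n) : 6 < lam n := by
  have : (3 : ℝ) ≤ n := by exact_mod_cast hn
  unfold lam
  nlinarith

lemma tendsto_lam_atTop : Tendsto lam atTop atTop := by
  refine tendsto_atTop_mono (fun n => ?_) tendsto_natCast_atTop_atTop
  unfold lam
  nlinarith [(n.cast_nonneg : (0 : ℝ) ≤ n)]

lemma aCoef_nonneg (n : ℕ) (m : ℤ) : 0 ≤ aCoef n m := Real.sqrt_nonneg _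

lemma aCoef_pos {n : ℕ} {m : ℤ} (h : m.natAbs < n) : 0 < aCoef n m := by
  have habs : |(m : ℝ)| < n := by
    rw [← Int.cast_abs, Int.abs_eq_natAbs]; exact_mod_cast h
  obtain ⟨h₁, h₂⟩ := abs_lt.mp habs
  have hn : (1 : ℝ) ≤ n := by exact_mod_cast Nat.one_le_of_lt h
  exact Real.sqrt_pos.mpr (div_pos (by nlinarith) (by nlinarith))

lemma aCoef_le_one {n : ℕ} (hn : 1 ≤ n) (m : ℤ) : aCoef n m ≤ 1 := by
  have hn : (1 : ℝ) ≤ n := by exact_mod_cast hn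
  refine Real.sqrt_le_one.mpr ((div_le_one (by nlinarith)).mpr ?_)
  nlinarith [sq_nonneg (m : ℝ)]

/-- `(x − m²)/(4x − 1)` is increasing in `x > 1/4` as soon as `4m² > 1`. -/
lemma aCoef_le_aCoef_succ {n : ℕ} (hn : 1 ≤ n) {m : ℤ} (hm : m ≠ 0) :
    aCoef n m ≤ aCoef (n + 1) m := by
  have hn : (1 : ℝ) ≤ n := by exact_mod_cast hn
  have hm : (1 : ℝ) ≤ (m : ℝ) ^ 2 := by
    have : (1 : ℤ) ≤ m ^ 2 := sq_abs m ▸ one_le_pow₀ (Int.one_le_abs hm)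
    exact_mod_cast this
  refine Real.sqrt_le_sqrt ((div_le_div_iff₀ (by nlinarith) (by push_cast; nlinarith)).mpr ?_)
  push_cast
  nlinarith [mul_nonneg (by linarith : (0 : ℝ) ≤ 2 * n + 1) (by linarith : (0 : ℝ) ≤ 4 * m ^ 2 - 1)]

lemma nonpos_of_le_add_two {g : ℕ → ℝ} (hg : ∀ k, g k ≤ g (k + 2))
    (hlim : Tendsto g atTop (𝓝 0)) (n : ℕ) : g n ≤ 0 := by
  have hmono : Monotone fun j => g (n + 2 * j) := monotone_nat_of_le_succ fun j => by
    rw [Nat.mul_succ, ← add_assoc]; exact hg _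
  have hprog : Tendsto (fun j : ℕ => n + 2 * j) atTop atTop :=
    tendsto_atTop_mono (fun j => show j ≤ n + 2 * j by omega) tendsto_id
  simpa using hmono.ge_of_tendsto (hlim.comp hprog) 0

lemma eq_zero_of_aCoef_recurrence {m : ℤ} (hm : m ≠ 0) {w : ℕ → ℂ}
    (hrec : ∀ k, (aCoef (k + 2) m : ℂ) * w (k + 2) + (aCoef (k + 1) m : ℂ) * w k = 0)
    (hw : Tendsto w atTop (𝓝 0)) {n : ℕ} (hn : m.natAbs ≤ n) : w n = 0 := by
  set g : ℕ → ℝ := fun k => aCoef (k + 1) m * ‖w k‖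
  have hnorm (k : ℕ) : aCoef (k + 2) m * ‖w (k + 2)‖ = g k := by
    have := congrArg norm (eq_neg_of_add_eq_zero_left (hrec k))
    simpa only [norm_neg, norm_mul, Complex.norm_real, Real.norm_eq_abs,
      abs_of_nonneg (aCoef_nonneg _ _)] using this
  have hstep (k : ℕ) : g k ≤ g (k + 2) :=
    (hnorm k).symm.le.trans <|
      mul_le_mul_of_nonneg_right (aCoef_le_aCoef_succ (by omega) hm) (norm_nonneg _)
  have hlim : Tendsto g atTop (𝓝 0) :=
    squeeze_zero (fun k => mul_nonneg (aCoef_nonneg _ _) (norm_nonneg _))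
      (fun k => mul_le_of_le_one_left (norm_nonneg _) (aCoef_le_one (by omega) m))
      (tendsto_zero_iff_norm_tendsto_zero.mp hw)
  have hgn : g n ≤ 0 := nonpos_of_le_add_two hstep hlim n
  exact norm_le_zero_iff.mp <|
    nonpos_of_mul_nonpos_right hgn (aCoef_pos (Nat.lt_succ_of_le hn))

lemma tendsto_zero_of_summable_sq {c : ℤ → ℕ → ℂ}
    (hsum : Summable fun p : ℤ × ℕ => ‖c p.1 p.2‖ ^ 2) (m : ℤ) :
    Tendsto (c m) atTop (𝓝 0) := by
  have hrow : Summable fun n => ‖c m n‖ ^ 2 :=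
    hsum.comp_injective (i := fun n : ℕ => (m, n)) fun _ _ h => (Prod.mk.inj h).2
  have := hrow.tendsto_atTop_zero.sqrt
  simp only [Real.sqrt_sq (norm_nonneg _), Real.sqrt_zero] at this
  exact tendsto_zero_iff_norm_tendsto_zero.mpr this

/-- Stated in coefficients: `u ∈ X` is `Σ_{m ≠ 0} Σ_{n ≥ max(2,|m|)} c_n^m Y_n^m`, and since
`Λ Y_n^m = m(1 − 6/λ_n)(a_n^m Y_{n−1}^m + a_{n+1}^m Y_{n+1}^m)`, the left side of the `↔` is the
vanishing of every coefficient of `Λu`. -/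
theorem stmt_14 (c : ℤ → ℕ → ℂ)
    (hm0 : ∀ n, c 0 n = 0)
    (hsupp : ∀ (m : ℤ) (n : ℕ), n < max 2 m.natAbs → c m n = 0)
    (hsum : Summable fun p : ℤ × ℕ => ‖c p.1 p.2‖ ^ 2) :
    (∀ (m : ℤ) (n : ℕ), 1 ≤ n →
        (0 : ℂ) = (m : ℂ) *
          ((((1 - 6 / lam (n + 1)) * aCoef (n + 1) m : ℝ) : ℂ) * c m (n + 1)
            + (((1 - 6 / lam (n - 1)) * aCoef n m : ℝ) : ℂ) * c m (n - 1)))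
      ↔ (∀ (m : ℤ) (n : ℕ), c m n ≠ 0 → n = 2) := by
  constructor
  · intro hker m n hc
    by_contra hn2
    have hm : m ≠ 0 := by rintro rfl; exact hc (hm0 n)
    have hn : max 2 m.natAbs ≤ n := not_lt.mp (mt (hsupp m n) hc)
    set w : ℕ → ℂ := fun k => ((1 - 6 / lam k : ℝ) : ℂ) * c m k
    have hrec (k : ℕ) : (aCoef (k + 2) m : ℂ) * w (k + 2) + (aCoef (k + 1) m : ℂ) * w k = 0 := by
      have := (mul_eq_zero.mp (hker m (k + 1) le_add_self).symm).resolve_left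
        (Int.cast_ne_zero.mpr hm)
      simp only [Nat.add_sub_cancel, Complex.ofReal_mul] at this
      linear_combination this
    have hw : Tendsto w atTop (𝓝 0) := by
      have hfac : Tendsto (fun k => 1 - 6 / lam k) atTop (𝓝 1) := by
        simpa using tendsto_const_nhds.sub (tendsto_const_nhds.div_atTop tendsto_lam_atTop)
      simpa [w] using (Complex.continuous_ofReal.tendsto 1 |>.comp hfac).mul
        (tendsto_zero_of_summable_sq hsum m)
    have hfac : (1 - 6 / lam n : ℝ) ≠ 0 := by
      have h6 : 6 < lam n := six_lt_lam (by omega)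
      exact sub_ne_zero.mpr ((div_lt_one (by linarith)).mpr h6).ne'
    exact hc ((mul_eq_zero.mp (eq_zero_of_aCoef_recurrence hm hrec hw
      (le_of_max_le_right hn))).resolve_left (Complex.ofReal_ne_zero.mpr hfac))
  · intro hsupp2 m n _
    have hterm (k : ℕ) (x : ℝ) : (((1 - 6 / lam k) * x : ℝ) : ℂ) * c m k = 0 := by
      by_cases hk : c m k = 0
      · simp [hk]
      · simp [hsupp2 m k hk, lam_two]
    rw [hterm, hterm, add_zero, mul_zero]
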